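/- arXiv:0905.2410 — 3 statements merged into one kernel-verified Lean document; each statement's English description precedes it below -/
import Mathlib

section
/- Let h be a Hilbert space, ξ ∈ h with h‖ξ‖² ≤ 1 for a real h > 0. Set c = √(1 − h‖ξ‖²), s = √h · |ξ⟩ : ℂ → h, and Q = |ξ'⟩⟨ξ'| the orthogonal projection onto ℂξ (with ξ' = ξ/‖ξ‖, taken to be 0 if ξ = 0). Then the block operator U = [[c, −s*],[s, cQ + Q^⊥]] on ℂ ⊕ h is unitary. -/
noncomputable section
open ContinuousLinearMap

variable {h : Type*} [NormedAddCommGroup h] [InnerProductSpace ℂ h] [CompleteSpace h]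

/-- The Hilbert space `ĥ = ℂ ⊕ h` (with the `ℓ²` direct sum norm). -/
abbrev hilHat (h : Type*) [NormedAddCommGroup h] [InnerProductSpace ℂ h] :=
  WithLp 2 (ℂ × h)

/-- Block operator `[[a, r],[cv, d]]` on `ℂ ⊕ h`, where `a ∈ B(ℂ) = ℂ`, `r ∈ B(h;ℂ)`,
`cv ∈ B(ℂ;h)`, `d ∈ B(h)`. -/
def blk (a : ℂ) (r : h →L[ℂ] ℂ) (cv : ℂ →L[ℂ] h) (d : h →L[ℂ] h) :
    hilHat h →L[ℂ] hilHat h :=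
  let e := WithLp.prodContinuousLinearEquiv 2 ℂ ℂ h
  (e.symm : ℂ × h →L[ℂ] hilHat h) ∘L
    (((a • ContinuousLinearMap.fst ℂ ℂ h + r ∘L ContinuousLinearMap.snd ℂ ℂ h).prod
      (cv ∘L ContinuousLinearMap.fst ℂ ℂ h + d ∘L ContinuousLinearMap.snd ℂ ℂ h))) ∘L
    (e : hilHat h →L[ℂ] ℂ × h)

/-- The normalisation `ξ' = ξ/‖ξ‖` (equal to `0` when `ξ = 0`). -/
def xiNorm (ξ : h) : h := (‖ξ‖⁻¹ : ℝ) • ξ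

/-- The projection `Q_ξ = |ξ'⟩⟨ξ'|` onto `ℂξ`. -/
def Qproj (ξ : h) : h →L[ℂ] h := (innerSL ℂ (xiNorm ξ)).smulRight (xiNorm ξ)

/-- The block operator `U_ξ^{(t)} = [[c, −s*],[s, cQ + Q^⊥]]` with
`c = √(1 − t‖ξ‖²)`, `s = √t·|ξ⟩`, `Q = Q_ξ`. -/
def Uop (ξ : h) (t : ℝ) : hilHat h →L[ℂ] hilHat h :=
  blk ((Real.sqrt (1 - t * ‖ξ‖ ^ 2) : ℝ) : ℂ)
    (-((Real.sqrt t : ℂ) • (innerSL ℂ ξ)))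
    ((Real.sqrt t : ℂ) • ContinuousLinearMap.toSpanSingleton ℂ ξ)
    (((Real.sqrt (1 - t * ‖ξ‖ ^ 2) : ℝ) : ℂ) • Qproj ξ +
      (ContinuousLinearMap.id ℂ h - Qproj ξ))

/-!
On the plane spanned by `(1, 0)` and `(0, ξ')` the operator `U` acts as the rotation
`[[c, -s‖ξ‖], [s‖ξ‖, c]]` (here `s = √t`), and on the orthogonal complement of that plane as the
identity. Algebraically: `U* = U` with `s` replaced by `-s`, and multiplying out the blocks of
`U(-s) U(s)` using `Q² = Q`, `Q |ξ⟩ = |ξ⟩`, `⟨ξ| Q = ⟨ξ|` and `|ξ⟩⟨ξ| = ‖ξ‖² Q` leaves the identity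
exactly when `c² + s²‖ξ‖² = 1`. Applying this to `s` and to `-s` gives `U*U = UU* = 1`.
-/

open InnerProductSpace ComplexConjugate

lemma IsIdempotentElem.smul_add_one_sub_mul {R A : Type*} [CommSemiring R] [Ring A] [Algebra R A]
    {p : A} (hp : IsIdempotentElem p) (a b : R) :
    (a • p + (1 - p)) * (b • p + (1 - p)) = (a * b) • p + (1 - p) := by
  simp only [add_mul, mul_add, smul_mul_assoc, mul_smul_comm, hp.eq, hp.one_sub.eq,
    hp.mul_one_sub_self, hp.one_sub_mul_self, smul_zero, add_zero, zero_add]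
  rw [smul_smul, mul_comm]

section

omit [CompleteSpace h]

@[simp]
lemma blk_apply_fst (a : ℂ) (r : h →L[ℂ] ℂ) (cv : ℂ →L[ℂ] h) (d : h →L[ℂ] h) (x : hilHat h) :
    (blk a r cv d x).fst = a * x.fst + r x.snd := rfl

@[simp]
lemma blk_apply_snd (a : ℂ) (r : h →L[ℂ] ℂ) (cv : ℂ →L[ℂ] h) (d : h →L[ℂ] h) (x : hilHat h) :
    (blk a r cv d x).snd = cv x.fst + d x.snd := rfl

lemma ext_hilHat {A B : hilHat h →L[ℂ] hilHat h}
    (hfst : ∀ x, (A x).fst = (B x).fst) (hsnd : ∀ x, (A x).snd = (B x).snd) : A = B :=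
  ext fun x ↦ WithLp.ofLp_injective 2 (Prod.ext (hfst x) (hsnd x))

lemma blk_one : blk (1 : ℂ) 0 0 (1 : h →L[ℂ] h) = 1 :=
  ext_hilHat (fun _ ↦ by simp) (fun _ ↦ by simp)

lemma blk_mul (a a' : ℂ) (r r' : h →L[ℂ] ℂ) (cv cv' : ℂ →L[ℂ] h) (d d' : h →L[ℂ] h) :
    blk a r cv d * blk a' r' cv' d' =
      blk (a * a' + r (cv' 1)) (a • r' + r ∘L d') (a' • cv + d ∘L cv') (cv ∘L r' + d * d') := by
  have hcv' : ∀ z : ℂ, cv' z = z • cv' 1 := fun z ↦ by rw [← map_smul, smul_eq_mul, mul_one]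
  refine ext_hilHat (fun x ↦ ?_) (fun x ↦ ?_)
  · simp only [mul_apply_eq_comp, blk_apply_fst, blk_apply_snd, hcv' x.fst, map_add, map_smul,
      smul_eq_mul, add_apply, smul_apply, comp_apply]
    ring
  · simp only [mul_apply_eq_comp, blk_apply_fst, blk_apply_snd, hcv' x.fst, map_add, map_smul,
      add_apply, smul_apply, comp_apply]
    rw [← smul_eq_mul, map_smul]
    abel

lemma Qproj_eq_rankOne (ξ : h) : Qproj ξ = rankOne ℂ (xiNorm ξ) (xiNorm ξ) := rfl

lemma xiNorm_eq_complex_smul (ξ : h) : xiNorm ξ = (‖ξ‖ : ℂ)⁻¹ • ξ := by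
  rw [xiNorm, ← Complex.coe_smul, Complex.ofReal_inv]

lemma Qproj_apply (ξ w : h) : Qproj ξ w = ((‖ξ‖ : ℂ) ^ 2)⁻¹ • ⟪ξ, w⟫_ℂ • ξ := by
  simp only [Qproj_eq_rankOne, rankOne_apply, xiNorm_eq_complex_smul, inner_smul_left, smul_smul,
    map_inv₀, Complex.conj_ofReal]
  congr 1
  ring

lemma Qproj_apply_self (ξ : h) : Qproj ξ ξ = ξ := by
  rcases eq_or_ne ξ 0 with rfl | hξ
  · simp
  · simp [Qproj_apply, inner_self_eq_norm_sq_to_K, smul_smul, hξ]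

lemma isIdempotentElem_Qproj (ξ : h) : IsIdempotentElem (Qproj ξ) := by
  ext w
  rw [mul_apply_eq_comp, Qproj_apply ξ w, map_smul, map_smul, Qproj_apply_self]

lemma toSpanSingleton_comp_innerSL (ξ : h) :
    toSpanSingleton ℂ ξ ∘L innerSL ℂ ξ = (‖ξ‖ : ℂ) ^ 2 • Qproj ξ := by
  ext w
  rcases eq_or_ne ξ 0 with rfl | hξ
  · simp
  · have hξ' : (‖ξ‖ : ℂ) ≠ 0 := by exact_mod_cast norm_ne_zero_iff.mpr hξ
    rw [smul_apply, Qproj_apply, smul_inv_smul₀ (pow_ne_zero 2 hξ')]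
    rfl

lemma Qproj_comp_toSpanSingleton (ξ : h) :
    Qproj ξ ∘L toSpanSingleton ℂ ξ = toSpanSingleton ℂ ξ :=
  ext_ring (by simpa using Qproj_apply_self ξ)

lemma innerSL_comp_Qproj (ξ : h) : innerSL ℂ ξ ∘L Qproj ξ = innerSL ℂ ξ := by
  rw [Qproj_eq_rankOne, innerSL_apply_comp_of_isSymmetric _ (isSymmetric_rankOne_self _),
    ← Qproj_eq_rankOne, Qproj_apply_self]

/-- `Uop ξ t` with `c = √(1 - t‖ξ‖²)` and `s = √t` replaced by free real parameters, so that the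
adjoint is again of this form (with `-s`). -/
def rotBlk (ξ : h) (c s : ℝ) : hilHat h →L[ℂ] hilHat h :=
  blk c (-((s : ℂ) • innerSL ℂ ξ)) ((s : ℂ) • toSpanSingleton ℂ ξ)
    ((c : ℂ) • Qproj ξ + (1 - Qproj ξ))

lemma Uop_eq_rotBlk (ξ : h) (t : ℝ) :
    Uop ξ t = rotBlk ξ (Real.sqrt (1 - t * ‖ξ‖ ^ 2)) (Real.sqrt t) := rfl

lemma rotBlk_neg_mul_rotBlk (ξ : h) {c s : ℝ} (hcs : c ^ 2 + s ^ 2 * ‖ξ‖ ^ 2 = 1) :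
    rotBlk ξ c (-s) * rotBlk ξ c s = 1 := by
  have hcs' : (c : ℂ) * c + s * s * (‖ξ‖ : ℂ) ^ 2 = 1 := by
    norm_cast
    linear_combination hcs
  rw [rotBlk, rotBlk, blk_mul, ← blk_one]
  congr 1
  · simp only [neg_apply, smul_apply, innerSL_apply_apply, toSpanSingleton_apply, one_smul,
      inner_smul_right, inner_self_eq_norm_sq_to_K, Complex.ofReal_neg]
    linear_combination hcs'
  · simp only [neg_comp, smul_comp, comp_add, comp_smul, comp_sub, one_def, comp_id,
      innerSL_comp_Qproj]
    module
  · simp only [add_comp, smul_comp, sub_comp, one_def, id_comp, comp_smul,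
      Qproj_comp_toSpanSingleton]
    module
  · rw [(isIdempotentElem_Qproj ξ).smul_add_one_sub_mul, smul_comp, comp_neg, comp_smul,
      toSpanSingleton_comp_innerSL]
    linear_combination (norm := module) hcs' • Qproj ξ

end

lemma star_blk (a : ℂ) (r : h →L[ℂ] ℂ) (cv : ℂ →L[ℂ] h) (d : h →L[ℂ] h) :
    star (blk a r cv d) = blk (conj a) (adjoint cv) (adjoint r) (adjoint d) := by
  rw [star_eq_adjoint, eq_comm, eq_adjoint_iff]
  intro x y
  simp only [WithLp.prod_inner_apply, WithLp.ofLp_fst, WithLp.ofLp_snd, blk_apply_fst,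
    blk_apply_snd, inner_add_left, inner_add_right, adjoint_inner_left]
  rw [← smul_eq_mul, ← smul_eq_mul a, inner_smul_left, inner_smul_right, starRingEnd_self_apply]
  ring

lemma star_rotBlk (ξ : h) (c s : ℝ) : star (rotBlk ξ c s) = rotBlk ξ c (-s) := by
  rw [rotBlk, rotBlk, star_blk]
  congr 1 <;> simp only [map_neg, map_smulₛₗ, map_add, map_sub, Complex.conj_ofReal,
    adjoint_toSpanSingleton, adjoint_innerSL_apply, Qproj_eq_rankOne, adjoint_rankOne,
    adjoint_one, Complex.ofReal_neg, neg_smul]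
  module

lemma rotBlk_mem_unitary (ξ : h) {c s : ℝ} (hcs : c ^ 2 + s ^ 2 * ‖ξ‖ ^ 2 = 1) :
    rotBlk ξ c s ∈ unitary (hilHat h →L[ℂ] hilHat h) := by
  refine ⟨?_, ?_⟩ <;> rw [star_rotBlk]
  · exact rotBlk_neg_mul_rotBlk ξ hcs
  · simpa only [neg_neg] using rotBlk_neg_mul_rotBlk ξ (s := -s) (by rwa [neg_sq])

/-- For `0 < t` with `t‖ξ‖² ≤ 1`, the block operator
`U = [[c, −s*],[s, cQ + Q^⊥]]` on `ℂ ⊕ h` is unitary. -/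
theorem stmt1 (ξ : h) (t : ℝ) (ht : 0 < t) (hξ : t * ‖ξ‖ ^ 2 ≤ 1) :
    Uop ξ t ∈ unitary (hilHat h →L[ℂ] hilHat h) := by
  rw [Uop_eq_rotBlk]
  refine rotBlk_mem_unitary ξ ?_
  rw [Real.sq_sqrt ht.le, Real.sq_sqrt (sub_nonneg.2 hξ)]
  ring
end
end

section
/- Let A be a (nonunital) C*-algebra, χ : A → ℂ a character (nonzero *-homomorphism), and γ : A → ℂ a bounded linear functional that is real (γ(a*) = conj(γ(a))) and nonnegative on ker χ, with the property that γ vanishes in the limit on approximate identities (formally: the extension of γ to the unitization kills 1). Then q(a,b) := γ(a*b) − conj(γ(a))·χ(b) − conj(χ(a))·γ(b) defines a nonnegative sesquilinear form on A. -/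
open scoped ComplexOrder

/-- The sesquilinear form `q(a,b) = γ(a*b) − conj(γ(a))·χ(b) − conj(χ(a))·γ(b)`. -/
noncomputable def qform {A : Type*} [NonUnitalNormedRing A] [StarRing A]
    [NormedSpace ℂ A] (χ : A →⋆ₙₐ[ℂ] ℂ) (γ : A →L[ℂ] ℂ) (a b : A) : ℂ :=
  γ (star a * b) - starRingEnd ℂ (γ a) * χ b - starRingEnd ℂ (χ a) * γ b

/-- Let `A` be a (nonunital) C*-algebra, `χ` a character on `A` and
`γ` a bounded real functional on `A` whose canonical extension `γ̃` to the unitization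
(with `γ̃(1) = 0`, i.e. `γ̃(x) = γ(x.snd)`) is positive on `ker χ̃` (equivalently:
`0 ≤ γ̃(x*x)` whenever `χ̃(x) = 0`).  Then
`q(a,b) = γ(a*b) − conj(γ(a))χ(b) − conj(χ(a))γ(b)` is a nonnegative sesquilinear
form on `A`. -/
theorem stmt4 {A : Type*} [NonUnitalNormedRing A] [StarRing A] [CStarRing A]
    [NormedSpace ℂ A] [IsScalarTower ℂ A A] [SMulCommClass ℂ A A] [StarModule ℂ A]
    (χ : A →⋆ₙₐ[ℂ] ℂ) (hχ : χ ≠ 0)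
    (γ : A →L[ℂ] ℂ)
    (hreal : ∀ a : A, γ (star a) = starRingEnd ℂ (γ a))
    (hpos : ∀ x : Unitization ℂ A, x.fst + χ x.snd = 0 → 0 ≤ γ ((star x * x).snd)) :
    (∀ a a' b : A, qform χ γ (a + a') b = qform χ γ a b + qform χ γ a' b) ∧
    (∀ a b b' : A, qform χ γ a (b + b') = qform χ γ a b + qform χ γ a b') ∧
    (∀ (z : ℂ) (a b : A), qform χ γ (z • a) b = starRingEnd ℂ z * qform χ γ a b) ∧
    (∀ (z : ℂ) (a b : A), qform χ γ a (z • b) = z * qform χ γ a b) ∧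
    (∀ a : A, 0 ≤ qform χ γ a a) := by
  refine ⟨?_, ?_, ?_, ?_, ?_⟩
  · intro a a' b
    simp only [qform, star_add, add_mul, map_add]
    ring
  · intro a b b'
    simp only [qform, mul_add, map_add]
    ring
  · intro z a b
    simp only [qform, star_smul, Complex.star_def, smul_mul_assoc, map_smul, smul_eq_mul,
      map_mul, RingHom.map_mul]
    ring
  · intro z a b
    simp only [qform, mul_smul_comm, map_smul, smul_eq_mul]
    ring
  · intro a
    have h := hpos (Unitization.inl (-(χ a)) + (a : Unitization ℂ A)) (by
      simp)
    have key : ((star (Unitization.inl (-(χ a)) + (a : Unitization ℂ A)) *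
        (Unitization.inl (-(χ a)) + (a : Unitization ℂ A))).snd : A)
        = star a * a - starRingEnd ℂ (χ a) • a - χ a • star a := by
      simp [Unitization.snd_mul, Unitization.snd_star, Unitization.fst_star, sub_eq_add_neg]
      abel
    rw [key] at h
    simp only [map_sub, map_smul, smul_eq_mul, hreal] at h
    have : qform χ γ a a = γ (star a * a) - starRingEnd ℂ (χ a) * γ a
        - χ a * starRingEnd ℂ (γ a) := by
      simp only [qform]; ring
    rw [this]
    convert h using 2
end

section
/- Let A be a C*-algebra with character χ, and let γ be a real bounded functional on A, extended to the unitization Ã with γ̃(1) = 0 and γ̃ positive on ker χ̃. Let q be the nonnegative sesquilinear form q(a,b) = γ(a*b) − conj(γ(a))χ(b) − conj(χ(a))γ(b), and define d : A → k as the canonical map into the Hilbert space completion of A/N_q (N_q the null space of q). Then for all a, b ∈ A: ‖d(ab) − χ(b)d(a)‖² ≤ ‖a‖² ‖d(b)‖². -/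
/-!
Write `ψ(b) = b − χ(b)·1` in the unitization `Ã`; it lies in the ideal `ker χ̃`. Then
`‖d(ab) − χ(b)d(a)‖² = γ̃(ψ(b)* a*a ψ(b))` and `‖d(b)‖² = γ̃(ψ(b)* ψ(b))`, so the claim is the bound
`|φ(h)| ≤ φ(1)‖h‖` for the self-adjoint element `h = a*a` and the functional
`φ(x) = γ̃(ψ(b)* x ψ(b))`, which is positive on all of `Ã`. As `A` need not be complete, the
C*-inequality `a*a ≤ ‖a‖²` is replaced by a power trick: Cauchy–Schwarz for `φ` gives
`|φ(h)|² ≤ φ(1)|φ(h²)|`, and iterating along `h, h², h⁴, …` against a crude bound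
`|φ(z)| ≤ M‖z‖` leaves `|φ(h)| ≤ φ(1)^(1 - 2⁻ⁿ) M^(2⁻ⁿ) ‖h‖ → φ(1)‖h‖`.
-/

open scoped ComplexOrder

open ComplexConjugate

theorem norm_sq_le_re_apply_one_mul_re {R : Type*} [Ring R] [StarRing R] [Algebra ℂ R]
    [StarModule ℂ R] (φ : R →ₗ[ℂ] ℂ) (hφ : ∀ x, φ (star x) = conj (φ x))
    (hpos : ∀ x, 0 ≤ φ (star x * x)) (x : R) :
    ‖φ x‖ ^ 2 ≤ (φ 1).re * (φ (star x * x)).re := by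
  let core : PreInnerProductSpace.Core ℂ R :=
    { inner x y := φ (star x * y)
      conj_inner_symm x y := by simp only [← hφ, star_mul, star_star]
      re_inner_nonneg x := (Complex.nonneg_iff.mp (hpos x)).1
      add_left x y z := by simp only [star_add, add_mul, map_add]
      smul_left x y c := by simp only [star_smul, smul_mul_assoc, map_smul, smul_eq_mul]; rfl }
  have h := InnerProductSpace.Core.inner_mul_inner_self_le (c := core) 1 x
  change ‖φ (star 1 * x)‖ * ‖φ (star x * 1)‖ ≤ (φ (star 1 * 1)).re * (φ (star x * x)).re at h
  rwa [star_one, one_mul, one_mul, mul_one, hφ, Complex.norm_conj, ← sq] at h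

theorem le_of_forall_pow_two_pow_le_mul {x y C : ℝ} (hy : 0 ≤ y)
    (h : ∀ n : ℕ, x ^ 2 ^ n ≤ C * y ^ 2 ^ n) : x ≤ y := by
  by_contra! hlt
  obtain rfl | hy := hy.eq_or_lt
  · linarith [show x ≤ 0 by simpa using h 0]
  have hr : 1 < x / y := (one_lt_div hy).mpr hlt
  obtain ⟨n, hn⟩ := pow_unbounded_of_one_lt C hr
  have : (x / y) ^ 2 ^ n ≤ C := by
    rw [div_pow, div_le_iff₀ (by positivity)]
    exact h n
  exact (hn.trans_le (pow_le_pow_right₀ hr.le Nat.lt_two_pow_self.le)).not_ge this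

section PowerTrick

variable {A : Type*} [NonUnitalNormedRing A] [StarRing A]

theorem le_norm_of_sq_le_apply_star_mul_self {f : A → ℝ} {M : ℝ} (hf : ∀ z, 0 ≤ f z)
    (hM : ∀ z, f z ≤ M * ‖z‖) (hsq : ∀ z, f z ^ 2 ≤ f (star z * z)) {h : A}
    (hh : IsSelfAdjoint h) : f h ≤ ‖h‖ := by
  let Z (n : ℕ) : A := (fun x ↦ x * x)^[n] h
  have hZ_succ (n : ℕ) : Z (n + 1) = Z n * Z n := Function.iterate_succ_apply' _ n h
  have hZ_selfAdjoint (n : ℕ) : IsSelfAdjoint (Z n) := by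
    induction n with
    | zero => exact hh
    | succ n ih => rw [hZ_succ]; nth_rewrite 1 [← ih.star_eq]; exact .star_mul_self _
  have hZ_norm (n : ℕ) : ‖Z n‖ ≤ ‖h‖ ^ 2 ^ n := by
    induction n with
    | zero => simp [Z]
    | succ n ih =>
      rw [hZ_succ, pow_succ, pow_mul, sq]
      exact (norm_mul_le _ _).trans (mul_le_mul ih ih (norm_nonneg _) (by positivity))
  have hZ_apply (n : ℕ) : f h ^ 2 ^ n ≤ f (Z n) := by
    induction n with
    | zero => simp [Z]
    | succ n ih =>
      calc f h ^ 2 ^ (n + 1) = (f h ^ 2 ^ n) ^ 2 := by rw [pow_succ, pow_mul]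
        _ ≤ f (Z n) ^ 2 := pow_le_pow_left₀ (pow_nonneg (hf h) _) ih 2
        _ ≤ f (Z (n + 1)) := by
          simpa only [(hZ_selfAdjoint n).star_eq, ← hZ_succ] using hsq (Z n)
  refine le_of_forall_pow_two_pow_le_mul (C := max M 0) (norm_nonneg h) fun n ↦ ?_
  calc f h ^ 2 ^ n ≤ f (Z n) := hZ_apply n
    _ ≤ M * ‖Z n‖ := hM _
    _ ≤ max M 0 * ‖Z n‖ := by gcongr; exact le_max_left M 0
    _ ≤ max M 0 * ‖h‖ ^ 2 ^ n := by gcongr; exact hZ_norm n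

theorem le_mul_norm_of_sq_le_mul_apply_star_mul_self {f : A → ℝ} {s M : ℝ} (hf : ∀ z, 0 ≤ f z)
    (hs : 0 ≤ s) (hM : ∀ z, f z ≤ M * ‖z‖) (hsq : ∀ z, f z ^ 2 ≤ s * f (star z * z)) {h : A}
    (hh : IsSelfAdjoint h) : f h ≤ s * ‖h‖ := by
  obtain rfl | hs := hs.eq_or_lt
  · have : f h = 0 := by simpa using hsq h
    simp [this]
  rw [← div_le_iff₀' hs]
  refine le_norm_of_sq_le_apply_star_mul_self (M := M / s) (fun z ↦ div_nonneg (hf z) hs.le)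
    (fun z ↦ ?_) (fun z ↦ ?_) hh
  · rw [div_mul_eq_mul_div]
    exact div_le_div_of_nonneg_right (hM z) hs.le
  · rw [div_pow, div_le_div_iff₀ (by positivity) hs]
    nlinarith [hsq z]

end PowerTrick

theorem norm_sub_smul_sq_eq_re_qform {A k : Type*} [NonUnitalNormedRing A] [StarRing A]
    [NormedSpace ℂ A] [IsScalarTower ℂ A A] [SMulCommClass ℂ A A] [StarModule ℂ A]
    [NormedAddCommGroup k] [InnerProductSpace ℂ k]
    (χ : A →⋆ₙₐ[ℂ] ℂ) (γ : A →L[ℂ] ℂ) (d : A → k)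
    (hd : ∀ a b : A, (inner ℂ (d a) (d b) : ℂ) = qform χ γ a b) (x y : A) (c : ℂ) :
    ‖d x - c • d y‖ ^ 2 = (qform χ γ (x - c • y) (x - c • y)).re := by
  have h : inner ℂ (d x - c • d y) (d x - c • d y) = qform χ γ (x - c • y) (x - c • y) := by
    simp only [inner_sub_left, inner_sub_right, inner_smul_left, inner_smul_right, hd, qform,
      star_sub, star_smul, sub_mul, mul_sub, smul_mul_assoc, mul_smul_comm, map_sub, map_smul,
      smul_eq_mul, Complex.star_def, map_mul]
    ring
  rw [norm_sq_eq_re_inner (𝕜 := ℂ), h]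
  rfl

section Unitization

variable {A : Type*} [NonUnitalNormedRing A] [StarRing A] [NormedSpace ℂ A]
  (χ : A →⋆ₙₐ[ℂ] ℂ) (γ : A →L[ℂ] ℂ)

/-- The element `ψ(b) = b − χ(b)·1` of the kernel of the extension of `χ` to the unitization. -/
noncomputable def kerProj (b : A) : Unitization ℂ A :=
  (b : Unitization ℂ A) - Unitization.inl (χ b)

@[simp] lemma fst_kerProj (b : A) : (kerProj χ b).fst = -χ b := zero_sub _

@[simp] lemma snd_kerProj (b : A) : (kerProj χ b).snd = b := sub_zero b

lemma fst_mul_kerProj_add_snd (y : Unitization ℂ A) (b : A) :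
    (y * kerProj χ b).fst + χ (y * kerProj χ b).snd = 0 := by
  simp only [Unitization.fst_mul, Unitization.snd_mul, fst_kerProj, snd_kerProj, map_add,
    map_smul, map_mul, smul_eq_mul]
  ring

lemma inr_mul_kerProj (a b : A) :
    (a : Unitization ℂ A) * kerProj χ b = kerProj χ (a * b - χ b • a) := by
  ext <;> simp [mul_comm, neg_add_eq_sub]

lemma qform_eq_snd_star_kerProj_mul (hreal : ∀ a : A, γ (star a) = conj (γ a)) (x y : A) :
    qform χ γ x y = γ (star (kerProj χ x) * kerProj χ y).snd := by
  simp only [qform, Unitization.snd_mul, Unitization.fst_star, fst_kerProj, star_neg,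
    RCLike.star_def, snd_kerProj, neg_smul, Unitization.snd_star, map_add, map_neg, map_smul,
    smul_eq_mul, hreal]
  ring

variable [IsScalarTower ℂ A A] [SMulCommClass ℂ A A]

/-- `x ↦ γ̃(w* x w)`, where `γ̃ = γ ∘ snd` extends `γ` to the unitization by `γ̃(1) = 0`. -/
noncomputable def compress (w : Unitization ℂ A) : Unitization ℂ A →ₗ[ℂ] ℂ where
  toFun x := γ (star w * x * w).snd
  map_add' x y := by simp only [mul_add, add_mul, Unitization.snd_add, map_add]
  map_smul' c x := by
    have : star w * c • x * w = c • (star w * x * w) :=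
      (congrArg (· * w) (Algebra.mul_smul_comm c (star w) x)).trans (Algebra.smul_mul_assoc c _ w)
    rw [this, Unitization.snd_smul, map_smul, RingHom.id_apply]

lemma compress_apply (w x : Unitization ℂ A) : compress γ w x = γ (star w * x * w).snd := rfl

lemma exists_norm_compress_inr_le [CStarRing A] (w : Unitization ℂ A) :
    ∃ M, ∀ z : A, ‖compress γ w z‖ ≤ M * ‖z‖ := by
  let L : A →L[ℂ] ℂ := ⟨compress γ w ∘ₗ Unitization.inrHom ℂ ℂ A, by
    change Continuous fun z : A ↦ γ (star w * (z : Unitization ℂ A) * w).snd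
    fun_prop⟩
  exact ⟨‖L‖, L.le_opNorm⟩

variable [StarModule ℂ A]

lemma compress_star (hreal : ∀ a : A, γ (star a) = conj (γ a)) (w x : Unitization ℂ A) :
    compress γ w (star x) = conj (compress γ w x) := by
  simp only [compress_apply, ← hreal, ← Unitization.snd_star, star_mul, star_star, mul_assoc]

lemma compress_kerProj_star_mul_self_nonneg
    (hpos : ∀ x : Unitization ℂ A, x.fst + χ x.snd = 0 → 0 ≤ γ ((star x * x).snd)) (b : A)
    (y : Unitization ℂ A) : 0 ≤ compress γ (kerProj χ b) (star y * y) := by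
  rw [compress_apply, show star (kerProj χ b) * (star y * y) * kerProj χ b =
    star (y * kerProj χ b) * (y * kerProj χ b) by
      simp only [star_mul (R := Unitization ℂ A), mul_assoc]]
  exact hpos _ (fst_mul_kerProj_add_snd χ y b)

lemma norm_compress_kerProj_le [CStarRing A] (hreal : ∀ a : A, γ (star a) = conj (γ a))
    (hpos : ∀ x : Unitization ℂ A, x.fst + χ x.snd = 0 → 0 ≤ γ ((star x * x).snd)) (b : A)
    {h : A} (hh : IsSelfAdjoint h) :
    ‖compress γ (kerProj χ b) h‖ ≤ (qform χ γ b b).re * ‖h‖ := by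
  set φ := compress γ (kerProj χ b)
  have hφ_one : φ 1 = qform χ γ b b := by
    rw [qform_eq_snd_star_kerProj_mul χ γ hreal, compress_apply, mul_one]
  have hφ_pos := compress_kerProj_star_mul_self_nonneg χ γ hpos b
  have hs : 0 ≤ (qform χ γ b b).re := by
    have h := hφ_pos 1
    rw [star_one (R := Unitization ℂ A), one_mul] at h
    exact hφ_one ▸ (Complex.nonneg_iff.mp h).1
  obtain ⟨M, hM⟩ := exists_norm_compress_inr_le γ (kerProj χ b)
  refine le_mul_norm_of_sq_le_mul_apply_star_mul_self (f := fun z : A ↦ ‖φ z‖)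
    (fun _ ↦ norm_nonneg _) hs hM (fun z ↦ ?_) hh
  calc ‖φ z‖ ^ 2 ≤ (φ 1).re * (φ (star (z : Unitization ℂ A) * z)).re :=
        norm_sq_le_re_apply_one_mul_re φ (compress_star γ hreal _) hφ_pos _
    _ ≤ (qform χ γ b b).re * ‖φ (star z * z : A)‖ := by
        rw [hφ_one, ← Unitization.inr_star, ← Unitization.inr_mul]
        exact mul_le_mul_of_nonneg_left (Complex.re_le_norm _) hs

end Unitization

theorem stmt5_general {A k : Type*} [NonUnitalNormedRing A] [StarRing A] [CStarRing A]
    [NormedSpace ℂ A] [IsScalarTower ℂ A A] [SMulCommClass ℂ A A] [StarModule ℂ A]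
    [NormedAddCommGroup k] [InnerProductSpace ℂ k]
    (χ : A →⋆ₙₐ[ℂ] ℂ)
    (γ : A →L[ℂ] ℂ)
    (hreal : ∀ a : A, γ (star a) = starRingEnd ℂ (γ a))
    (hpos : ∀ x : Unitization ℂ A, x.fst + χ x.snd = 0 → 0 ≤ γ ((star x * x).snd))
    (d : A → k)
    (hd : ∀ a b : A, (inner ℂ (d a) (d b) : ℂ) = qform χ γ a b) :
    ∀ a b : A, ‖d (a * b) - χ b • d a‖ ^ 2 ≤ ‖a‖ ^ 2 * ‖d b‖ ^ 2 := by
  intro a b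
  have h_lhs : ‖d (a * b) - χ b • d a‖ ^ 2 = (compress γ (kerProj χ b) (star a * a : A)).re := by
    rw [norm_sub_smul_sq_eq_re_qform χ γ d hd, qform_eq_snd_star_kerProj_mul χ γ hreal,
      ← inr_mul_kerProj, compress_apply, star_mul (R := Unitization ℂ A), Unitization.inr_mul,
      Unitization.inr_star]
    simp only [mul_assoc]
  have h_rhs : ‖d b‖ ^ 2 = (qform χ γ b b).re := by
    rw [norm_sq_eq_re_inner (𝕜 := ℂ), hd]
    rfl
  calc ‖d (a * b) - χ b • d a‖ ^ 2 ≤ ‖compress γ (kerProj χ b) (star a * a : A)‖ :=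
        h_lhs ▸ Complex.re_le_norm _
    _ ≤ (qform χ γ b b).re * ‖star a * a‖ :=
        norm_compress_kerProj_le χ γ hreal hpos b (.star_mul_self a)
    _ = ‖a‖ ^ 2 * ‖d b‖ ^ 2 := by rw [CStarRing.norm_star_mul_self, h_rhs]; ring

/-- Let `A` be a C*-algebra with character `χ`, `γ` a real bounded
functional whose canonical extension `γ̃` to the unitization (with `γ̃(1) = 0`) is
positive on `ker χ̃`.  Let `k` be the GNS-type Hilbert space for the nonnegative
sesquilinear form `q` and `d : A → k` the canonical map, so `⟨d(a), d(b)⟩ = q(a,b)`.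
Then `‖d(ab) − χ(b)d(a)‖² ≤ ‖a‖² ‖d(b)‖²` for all `a, b ∈ A`. -/
theorem stmt5 {A k : Type*} [NonUnitalNormedRing A] [StarRing A] [CStarRing A]
    [NormedSpace ℂ A] [IsScalarTower ℂ A A] [SMulCommClass ℂ A A] [StarModule ℂ A]
    [NormedAddCommGroup k] [InnerProductSpace ℂ k] [CompleteSpace k]
    (χ : A →⋆ₙₐ[ℂ] ℂ) (hχ : χ ≠ 0)
    (γ : A →L[ℂ] ℂ)
    (hreal : ∀ a : A, γ (star a) = starRingEnd ℂ (γ a))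
    (hpos : ∀ x : Unitization ℂ A, x.fst + χ x.snd = 0 → 0 ≤ γ ((star x * x).snd))
    (d : A → k)
    (hd : ∀ a b : A, (inner ℂ (d a) (d b) : ℂ) = qform χ γ a b) :
    ∀ a b : A, ‖d (a * b) - χ b • d a‖ ^ 2 ≤ ‖a‖ ^ 2 * ‖d b‖ ^ 2 :=
  stmt5_general χ γ hreal hpos d hd
end
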